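/- arXiv:1310.5380 — 6 statements merged into one kernel-verified Lean document; each statement's English description precedes it below -/
import Mathlib

section
/- Let S be a finite set with |S| ≥ 2 and n ≥ 1. For any bijection E : S^n → S^n, there exists a sequence of 2n-1 assignment operations with signature 1,2,...,n,n-1,...,1 computing E; that is, there exist maps f_1,...,f_n,g_{n-1},...,g_1 : S^n → S such that applying successively x_1 := f_1(x), x_2 := f_2(x), ..., x_n := f_n(x), x_{n-1} := g_{n-1}(x), ..., x_1 := g_1(x) (each assignment overwriting the indicated component of the current vector) maps every X ∈ S^n to E(X). -/
/-- Execute an in situ program: each assignment `(ψ, i)` replaces the `i`-th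
component of the current vector by `ψ` applied to the current vector. -/
def runProg {S : Type*} {n : ℕ} (prog : List (((Fin n → S) → S) × Fin n))
    (x : Fin n → S) : Fin n → S :=
  prog.foldl (fun v p => Function.update v p.2 (p.1 v)) x

open Finset in

/-- Key combinatorial lemma: if all fibers of `f` and `g` inside `A` have
size `q`, there is a coloring of `A` with `q` colors that is injective on
every fiber of `f` and every fiber of `g` (within `A`). -/
lemma exists_coloring (q : ℕ) {X R : Type*} [DecidableEq X] [DecidableEq R] [Fintype R]
    (A : Finset X) (f g : X → R)
    (hf : ∀ r, (A.filter fun x => f x = r).card = q)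
    (hg : ∀ r, (A.filter fun x => g x = r).card = q) :
    ∃ c : X → ℕ, (∀ x ∈ A, c x < q) ∧
      (∀ x ∈ A, ∀ y ∈ A, f x = f y → c x = c y → x = y) ∧
      (∀ x ∈ A, ∀ y ∈ A, g x = g y → c x = c y → x = y) := by
  induction q generalizing A with
  | zero =>
    have hA : A = ∅ := by
      by_contra h
      obtain ⟨x, hx⟩ := Finset.nonempty_iff_ne_empty.mpr h
      have h2 := Finset.card_eq_zero.mp (hf (f x))
      exact Finset.eq_empty_iff_forall_notMem.mp h2 x (Finset.mem_filter.mpr ⟨hx, rfl⟩)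
    subst hA
    exact ⟨fun _ => 0, by simp, by simp, by simp⟩
  | succ q ih =>
    -- Hall's theorem gives a transversal
    set t : R → Finset R := fun r => (A.filter fun x => f x = r).image g with ht
    have hall : ∀ s : Finset R, s.card ≤ (s.biUnion t).card := by
      intro s
      set P := s.biUnion t with hP
      have h1 : (s.biUnion fun r => A.filter fun x => f x = r).card = s.card * (q+1) := by
        rw [Finset.card_biUnion]
        · simp [hf, Finset.sum_const, mul_comm]
        · intro r hr r' hr' hne
          simp only [Finset.disjoint_left, Finset.mem_filter]
          rintro a ⟨-, h1⟩ ⟨-, h2⟩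
          exact hne (h1 ▸ h2 ▸ rfl)
      have h2 : (s.biUnion fun r => A.filter fun x => f x = r) ⊆
          P.biUnion fun r' => A.filter fun x => g x = r' := by
        intro x hx
        simp only [Finset.mem_biUnion, Finset.mem_filter] at hx ⊢
        obtain ⟨r, hr, hxA, hfx⟩ := hx
        refine ⟨g x, ?_, hxA, rfl⟩
        rw [hP]
        exact Finset.mem_biUnion.mpr ⟨r, hr, Finset.mem_image.mpr ⟨x, by simp [hxA, hfx], rfl⟩⟩
      have h3 : (P.biUnion fun r' => A.filter fun x => g x = r').card = P.card * (q+1) := by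
        rw [Finset.card_biUnion]
        · simp [hg, Finset.sum_const, mul_comm]
        · intro r hr r' hr' hne
          simp only [Finset.disjoint_left, Finset.mem_filter]
          rintro a ⟨-, h1⟩ ⟨-, h2⟩
          exact hne (h1 ▸ h2 ▸ rfl)
      have := Finset.card_le_card h2
      rw [h1, h3] at this
      exact Nat.le_of_mul_le_mul_right this (Nat.succ_pos q)
    obtain ⟨m, hminj, hmt⟩ := (Finset.all_card_le_biUnion_card_iff_exists_injective t).mp hall
    have hmbij : Function.Bijective m := Finite.injective_iff_bijective.mp hminj
    -- choose a representative in each f-fiber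
    have hex : ∀ r, ∃ x, x ∈ A ∧ f x = r ∧ g x = m r := by
      intro r
      have := hmt r
      rw [ht] at this
      simp only [Finset.mem_image, Finset.mem_filter] at this
      obtain ⟨x, ⟨hxA, hfx⟩, hgx⟩ := this
      exact ⟨x, hxA, hfx, hgx⟩
    choose xr hxrA hxrf hxrg using hex
    set T : Finset X := Finset.image xr Finset.univ with hT
    have hxr_inj : Function.Injective xr := fun a b h => by
      rw [← hxrf a, h, hxrf b]
    have hmemT : ∀ x, x ∈ T ↔ ∃ r, xr r = x := by
      intro x; simp [hT]
    have hTA : T ⊆ A := by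
      intro x hx; obtain ⟨r, rfl⟩ := (hmemT x).mp hx; exact hxrA r
    -- the new fiber cards
    have hf' : ∀ r, ((A \ T).filter fun x => f x = r).card = q := by
      intro r
      have key : (A \ T).filter (fun x => f x = r) =
          (A.filter fun x => f x = r).erase (xr r) := by
        ext x
        simp only [Finset.mem_filter, Finset.mem_sdiff, Finset.mem_erase]
        constructor
        · rintro ⟨⟨hxA, hxT⟩, hfx⟩
          refine ⟨fun h => hxT ?_, hxA, hfx⟩
          exact (hmemT x).mpr ⟨r, h.symm⟩
        · rintro ⟨hne, hxA, hfx⟩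
          refine ⟨⟨hxA, fun h => ?_⟩, hfx⟩
          obtain ⟨r', rfl⟩ := (hmemT x).mp h
          have : r' = r := by rw [← hfx, hxrf]
          exact hne (by rw [this])
      rw [key, Finset.card_erase_of_mem (Finset.mem_filter.mpr ⟨hxrA r, hxrf r⟩), hf]
      rfl
    have hg' : ∀ r, ((A \ T).filter fun x => g x = r).card = q := by
      intro r
      obtain ⟨r0, hr0⟩ := hmbij.surjective r
      have key : (A \ T).filter (fun x => g x = r) =
          (A.filter fun x => g x = r).erase (xr r0) := by
        ext x
        simp only [Finset.mem_filter, Finset.mem_sdiff, Finset.mem_erase]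
        constructor
        · rintro ⟨⟨hxA, hxT⟩, hgx⟩
          refine ⟨fun h => hxT ?_, hxA, hgx⟩
          exact (hmemT x).mpr ⟨r0, h.symm⟩
        · rintro ⟨hne, hxA, hgx⟩
          refine ⟨⟨hxA, fun h => ?_⟩, hgx⟩
          obtain ⟨r', rfl⟩ := (hmemT x).mp h
          have : m r' = m r0 := by rw [← hxrg, hgx]; exact hr0.symm
          exact hne (by rw [hminj this])
      rw [key, Finset.card_erase_of_mem (Finset.mem_filter.mpr ⟨hxrA r0, by rw [hxrg, hr0]⟩), hg]
      rfl
    obtain ⟨c', hc'lt, hc'f, hc'g⟩ := ih (A \ T) hf' hg'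
    refine ⟨fun x => if x ∈ T then q else c' x, ?_, ?_, ?_⟩
    · intro x hx
      by_cases h : x ∈ T
      · simp [h]
      · simpa [h] using Nat.lt_succ_of_lt (hc'lt x (Finset.mem_sdiff.mpr ⟨hx, h⟩))
    · intro x hx y hy hfxy hcxy
      by_cases h1 : x ∈ T <;> by_cases h2 : y ∈ T <;> simp only [h1, h2, if_pos, if_neg,
        if_true, if_false] at hcxy
      · obtain ⟨r1, rfl⟩ := (hmemT x).mp h1
        obtain ⟨r2, rfl⟩ := (hmemT y).mp h2
        rw [hxrf, hxrf] at hfxy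
        rw [hfxy]
      · exact absurd hcxy.symm (Nat.ne_of_lt (hc'lt y (Finset.mem_sdiff.mpr ⟨hy, h2⟩)))
      · exact absurd hcxy (Nat.ne_of_lt (hc'lt x (Finset.mem_sdiff.mpr ⟨hx, h1⟩)))
      · exact hc'f x (Finset.mem_sdiff.mpr ⟨hx, h1⟩) y (Finset.mem_sdiff.mpr ⟨hy, h2⟩) hfxy hcxy
    · intro x hx y hy hgxy hcxy
      by_cases h1 : x ∈ T <;> by_cases h2 : y ∈ T <;> simp only [h1, h2, if_pos, if_neg,
        if_true, if_false] at hcxy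
      · obtain ⟨r1, rfl⟩ := (hmemT x).mp h1
        obtain ⟨r2, rfl⟩ := (hmemT y).mp h2
        rw [hxrg, hxrg] at hgxy
        rw [hminj hgxy]
      · exact absurd hcxy.symm (Nat.ne_of_lt (hc'lt y (Finset.mem_sdiff.mpr ⟨hy, h2⟩)))
      · exact absurd hcxy (Nat.ne_of_lt (hc'lt x (Finset.mem_sdiff.mpr ⟨hx, h1⟩)))
      · exact hc'g x (Finset.mem_sdiff.mpr ⟨hx, h1⟩) y (Finset.mem_sdiff.mpr ⟨hy, h2⟩) hgxy hcxy


lemma exists_FG {S : Type*} [Fintype S] {n : ℕ}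
    (E : (Fin (n+1) → S) → (Fin (n+1) → S)) (hE : Function.Bijective E) :
    ∃ F : (Fin (n+1) → S) → S, ∃ G : S → (Fin n → S) → S,
      (∀ t : Fin n → S, Function.Bijective fun s => F (Fin.cons s t)) ∧
      (∀ t' : Fin n → S, Function.Bijective fun c => G c t') ∧
      (∀ x, G (F x) (Fin.tail (E x)) = E x 0) := by
  classical
  set q := Fintype.card S with hq
  have htail_card : ∀ t : Fin n → S,
      (Finset.univ.filter fun x : Fin (n+1) → S => Fin.tail x = t).card = q := by
    intro t
    have : (Finset.univ.filter fun x : Fin (n+1) → S => Fin.tail x = t) =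
        Finset.univ.image fun s : S => Fin.cons s t := by
      ext x
      simp only [Finset.mem_filter, Finset.mem_image, Finset.mem_univ, true_and]
      constructor
      · intro h; exact ⟨x 0, by rw [← h, Fin.cons_self_tail]⟩
      · rintro ⟨s, rfl⟩; simp
    rw [this, Finset.card_image_of_injective _ (fun a b h => by
      have := congrFun h 0; simpa using this)]
    simp [hq]
  have hf : ∀ t : Fin n → S,
      (Finset.univ.filter fun x : Fin (n+1) → S => Fin.tail x = t).card = q := htail_card
  have hg : ∀ t : Fin n → S,
      (Finset.univ.filter fun x : Fin (n+1) → S => Fin.tail (E x) = t).card = q := by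
    intro t
    rw [← htail_card t]
    apply Finset.card_bij (fun x _ => E x)
    · intro a ha
      simp only [Finset.mem_filter, Finset.mem_univ, true_and] at ha ⊢
      exact ha
    · intro a _ b _ h
      exact hE.injective h
    · intro b hb
      obtain ⟨a, rfl⟩ := hE.surjective b
      simp only [Finset.mem_filter, Finset.mem_univ, true_and] at hb ⊢
      exact ⟨a, by simp [hb]⟩
  obtain ⟨c, hclt, hcf, hcg⟩ := exists_coloring q Finset.univ
    (fun x : Fin (n+1) → S => Fin.tail x) (fun x => Fin.tail (E x)) hf hg
  set eS : Fin q ≃ S := (Fintype.equivFin S).symm with heS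
  set F : (Fin (n+1) → S) → S := fun x => eS ⟨c x, hclt x (Finset.mem_univ x)⟩ with hF
  have hFc : ∀ x y, F x = F y → c x = c y := by
    intro x y h
    rw [hF] at h
    have := eS.injective h
    exact Fin.mk.inj_iff.mp this
  have hFbij : ∀ t : Fin n → S, Function.Bijective fun s => F (Fin.cons s t) := by
    intro t
    apply Finite.injective_iff_bijective.mp
    intro s s' h
    have := hcf (Fin.cons s t) (Finset.mem_univ _) (Fin.cons s' t) (Finset.mem_univ _)
      (by rw [Fin.tail_cons, Fin.tail_cons]) (hFc _ _ h)
    have := congrFun this 0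
    simpa using this
  set Eq : (Fin (n+1) → S) ≃ (Fin (n+1) → S) := Equiv.ofBijective E hE with hEq
  have hEqs : ∀ x, Eq.symm (E x) = x := fun x => Eq.symm_apply_apply x
  set ψ : (Fin n → S) → S → S := fun t' s => F (Eq.symm (Fin.cons s t')) with hψ
  have hψbij : ∀ t', Function.Bijective (ψ t') := by
    intro t'
    apply Finite.injective_iff_bijective.mp
    intro s s' h
    have htl : ∀ s0 : S, Fin.tail (E (Eq.symm (Fin.cons s0 t'))) = t' := by
      intro s0
      have : E (Eq.symm (Fin.cons s0 t')) = Fin.cons s0 t' := Eq.apply_symm_apply _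
      rw [this, Fin.tail_cons]
    have := hcg (Eq.symm (Fin.cons s t')) (Finset.mem_univ _) (Eq.symm (Fin.cons s' t'))
      (Finset.mem_univ _) (by rw [htl, htl]) (hFc _ _ h)
    have h2 := Eq.symm.injective this
    have := congrFun h2 0
    simpa using this
  set G : S → (Fin n → S) → S := fun c' t' => (Equiv.ofBijective (ψ t') (hψbij t')).symm c'
    with hG
  refine ⟨F, G, hFbij, ?_, ?_⟩
  · intro t'
    exact (Equiv.ofBijective (ψ t') (hψbij t')).symm.bijective
  · intro x
    rw [hG]
    have : ψ (Fin.tail (E x)) (E x 0) = F x := by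
      rw [hψ]
      simp only []
      rw [Fin.cons_self_tail, hEqs]
    rw [← this]
    exact (Equiv.ofBijective _ (hψbij _)).symm_apply_apply (E x 0)


lemma runProg_cons {S : Type*} {n : ℕ} (p : ((Fin n → S) → S) × Fin n)
    (l : List (((Fin n → S) → S) × Fin n)) (x : Fin n → S) :
    runProg (p :: l) x = runProg l (Function.update x p.2 (p.1 x)) := rfl

lemma runProg_append {S : Type*} {n : ℕ} (l₁ l₂ : List (((Fin n → S) → S) × Fin n))
    (x : Fin n → S) : runProg (l₁ ++ l₂) x = runProg l₂ (runProg l₁ x) :=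
  by simp [runProg]

lemma runProg_lift {S : Type*} {k : ℕ} (L : List ((S → (Fin k → S) → S) × Fin k))
    (x : Fin (k+1) → S) :
    runProg (L.map fun p => ((fun y => p.1 (y 0) (Fin.tail y)), p.2.succ)) x
      = Fin.cons (x 0) (runProg (L.map fun p => (p.1 (x 0), p.2)) (Fin.tail x)) := by
  induction L generalizing x with
  | nil => simp [runProg, Fin.cons_self_tail]
  | cons p L ih =>
    simp only [List.map_cons]
    rw [runProg_cons, runProg_cons, ih]
    have hx'0 : Function.update x p.2.succ (p.1 (x 0) (Fin.tail x)) 0 = x 0 :=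
      Function.update_of_ne (Fin.succ_ne_zero p.2).symm _ _
    have hx't : Fin.tail (Function.update x p.2.succ (p.1 (x 0) (Fin.tail x)))
        = Function.update (Fin.tail x) p.2 (p.1 (x 0) (Fin.tail x)) :=
      Fin.tail_update_succ _ _ _
    rw [hx'0, hx't]

lemma insitu_aux {S : Type*} [Fintype S] :
    ∀ n (E : (Fin n → S) → (Fin n → S)), Function.Bijective E →
    ∃ f g : Fin n → ((Fin n → S) → S),
      ∀ x, runProg ((List.finRange n).map (fun i => (f i, i)) ++
          ((List.finRange n).take (n - 1)).reverse.map (fun i => (g i, i))) x = E x := by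
  intro n
  induction n with
  | zero =>
    intro E hE
    refine ⟨Fin.elim0, Fin.elim0, fun x => ?_⟩
    simp only [List.finRange_zero, List.map_nil, List.take_nil, List.reverse_nil,
      List.nil_append, runProg]
    simp only [List.foldl_nil]
    funext i
    exact isEmptyElim i
  | succ m ih =>
    match m, ih with
    | 0, _ =>
      intro E hE
      refine ⟨fun _ => fun x => E x 0, fun _ => fun x => x 0, fun x => ?_⟩
      simp only [List.finRange_succ, List.finRange_zero, List.map_nil, List.map_cons,
        Nat.sub_self, List.take_zero, List.reverse_nil, List.nil_append, List.append_nil]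
      rw [runProg_cons]
      show runProg [] _ = _
      simp only [runProg, List.foldl_nil]
      funext i
      have : i = 0 := Fin.ext (by omega)
      subst this
      simp
    | k+1, ih =>
      intro E hE
      obtain ⟨F, G, hFbij, hGbij, hFG⟩ := exists_FG E hE
      set σ : (Fin (k+1) → S) → (S ≃ S) := fun t => Equiv.ofBijective _ (hFbij t) with hσdef
      have hσ : ∀ x : Fin (k+2) → S, (σ (Fin.tail x)).symm (F x) = x 0 := by
        intro x
        apply (σ (Fin.tail x)).injective
        rw [Equiv.apply_symm_apply]
        show F x = F (Fin.cons (x 0) (Fin.tail x))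
        rw [Fin.cons_self_tail]
      set M : S → (Fin (k+1) → S) → (Fin (k+1) → S) :=
        fun a t => Fin.tail (E (Fin.cons ((σ t).symm a) t)) with hMdef
      have hFcons : ∀ (s : S) (t : Fin (k+1) → S), F (Fin.cons ((σ t).symm s) t) = s := by
        intro s t
        show σ t ((σ t).symm s) = s
        exact (σ t).apply_symm_apply s
      have hME : ∀ x : Fin (k+2) → S, M (F x) (Fin.tail x) = Fin.tail (E x) := by
        intro x
        show Fin.tail (E (Fin.cons ((σ (Fin.tail x)).symm (F x)) (Fin.tail x))) = _
        rw [hσ x, Fin.cons_self_tail]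
      have hMbij : ∀ a, Function.Bijective (M a) := by
        intro a
        apply Finite.injective_iff_bijective.mp
        intro t t' h
        set x : Fin (k+2) → S := Fin.cons ((σ t).symm a) t with hx
        set x' : Fin (k+2) → S := Fin.cons ((σ t').symm a) t' with hx'
        have htl : Fin.tail (E x) = Fin.tail (E x') := h
        have h0 : E x 0 = E x' 0 := by
          rw [← hFG x, ← hFG x', hx, hx', hFcons, hFcons, htl]
        have hExx : E x = E x' := by
          rw [← Fin.cons_self_tail (E x), ← Fin.cons_self_tail (E x'), h0, htl]
        have hxx : x = x' := hE.injective hExx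
        have := congrArg Fin.tail hxx
        rw [hx, hx'] at this
        simpa [Fin.tail_cons] using this
      choose fin gin hin using fun a => ih (M a) (hMbij a)
      set f : Fin (k+2) → ((Fin (k+2) → S) → S) :=
        Fin.cases F (fun i x => fin (x 0) i (Fin.tail x)) with hfdef
      set g : Fin (k+2) → ((Fin (k+2) → S) → S) :=
        Fin.cases (fun x => G (x 0) (Fin.tail x)) (fun i x => gin (x 0) i (Fin.tail x))
        with hgdef
      set LL : List ((S → (Fin (k+1) → S) → S) × Fin (k+1)) :=
        (List.finRange (k+1)).map (fun i => ((fun a => fin a i), i)) ++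
          ((List.finRange (k+1)).take k).reverse.map (fun i => ((fun a => gin a i), i))
        with hLLdef
      have hLL1 : ∀ a, LL.map (fun p => (p.1 a, p.2)) =
          (List.finRange (k+1)).map (fun i => (fin a i, i)) ++
            ((List.finRange (k+1)).take (k+1-1)).reverse.map (fun i => (gin a i, i)) := by
        intro a
        simp [hLLdef, List.map_map, Function.comp_def]
      have hLL2 : LL.map (fun p => ((fun y => p.1 (y 0) (Fin.tail y)), p.2.succ)) =
          (List.finRange (k+1)).map (fun i => (f i.succ, i.succ)) ++
            ((List.finRange (k+1)).take k).reverse.map (fun i => (g i.succ, i.succ)) := by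
        simp [hLLdef, hfdef, hgdef, List.map_map, Function.comp_def]
      have hT : ((List.finRange (k+2)).map (fun i => (f i, i)) ++
            ((List.finRange (k+2)).take (k+2-1)).reverse.map (fun i => (g i, i)))
          = (f 0, 0) ::
            ((LL.map (fun p => ((fun y => p.1 (y 0) (Fin.tail y)), p.2.succ)))
              ++ [(g 0, 0)]) := by
        rw [hLL2]
        simp [List.finRange_succ, List.take_succ_cons, List.reverse_cons,
          List.map_map, Function.comp_def, List.map_take, List.map_reverse,
          List.append_assoc]
      refine ⟨f, g, fun x => ?_⟩
      rw [hT, runProg_cons, runProg_append, runProg_lift]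
      set x1 := Function.update x (0 : Fin (k+2)) (f 0 x) with hx1
      have hx10 : x1 0 = F x := by
        rw [hx1, Function.update_self, hfdef]
        simp
      have hx1t : Fin.tail x1 = Fin.tail x := Fin.tail_update_zero _ _
      rw [hx10, hx1t, hLL1, hin, hME]
      set y := Fin.cons (F x) (Fin.tail (E x)) with hy
      show runProg [(g 0, 0)] y = E x
      rw [runProg_cons]
      show Function.update y 0 (g 0 y) = E x
      have hg0 : g 0 y = E x 0 := by
        rw [hgdef]
        show G (y 0) (Fin.tail y) = E x 0
        rw [hy, Fin.cons_zero, Fin.tail_cons, hFG]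
      rw [hg0, hy, Fin.update_cons_zero, Fin.cons_self_tail]


/-- Any bijection of `S^n` (S finite, `|S| ≥ 2`, `n ≥ 1`) is computed by an in
situ program of length `2n-1` with signature `1,…,n,n-1,…,1`. -/
theorem bijective_insitu_two_n_sub_one
    (S : Type*) [Fintype S] (hS : 2 ≤ Fintype.card S)
    (n : ℕ) (hn : 1 ≤ n)
    (E : (Fin n → S) → (Fin n → S)) (hE : Function.Bijective E) :
    ∃ f g : Fin n → ((Fin n → S) → S),
      ∀ x, runProg
        ((List.finRange n).map (fun i => (f i, i)) ++
          ((List.finRange n).take (n - 1)).reverse.map (fun i => (g i, i))) x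
        = E x := by
  exact insitu_aux n E hE
end

section
/- Let S be a finite set and let E : S^n → S^n be a permutation of the n coordinate variables (i.e., E(x_1,...,x_n) = (x_{σ(1)},...,x_{σ(n)}) for a permutation σ of {1,...,n}). If c is the number of cycles of σ of length at least 2 and f is the number of fixed points of σ, then any in situ program computing E has length at least n - f + c. -/
lemma runProg_no_write {S : Type*} {n : ℕ} [DecidableEq S]
    (l : List (((Fin n → S) → S) × Fin n)) (i : Fin n)
    (h : ∀ p ∈ l, p.2 ≠ i) (x : Fin n → S) : runProg l x i = x i := by
  induction l generalizing x with
  | nil => rfl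
  | cons q l ih =>
    have hq2 : q.2 ≠ i := h q (List.mem_cons_self)
    have hrest : ∀ p ∈ l, p.2 ≠ i := fun p hp => h p (List.mem_cons_of_mem _ hp)
    show runProg l (Function.update x q.2 (q.1 x)) i = x i
    rw [ih hrest]
    exact Function.update_of_ne (Ne.symm hq2) _ _

/-- An in situ program computing a permutation of the `n` variables has length
at least `n - f + c`, where `c` is the number of cycles of length ≥ 2 and `f`
the number of fixed points of the permutation. -/
theorem insitu_perm_lower_bound
    (S : Type*) [Fintype S] [DecidableEq S] (hS : 2 ≤ Fintype.card S)
    (n : ℕ) (σ : Equiv.Perm (Fin n))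
    (prog : List (((Fin n → S) → S) × Fin n))
    (hprog : ∀ x, runProg prog x = fun i => x (σ i)) :
    n - (Finset.univ.filter fun i => σ i = i).card + σ.cycleType.card
      ≤ prog.length := by
  classical
  obtain ⟨a, b, hab⟩ := Fintype.exists_pair_of_one_lt_card (by omega : 1 < Fintype.card S)
  set cnt : Fin n → ℕ := fun i => (prog.map Prod.snd).count i with hcnt
  -- injectivity of prefix maps
  have hinj : ∀ l₁ l₂, prog = l₁ ++ l₂ → Function.Injective (runProg l₁) := by
    intro l₁ l₂ hsplit x y hxy
    have h1 : runProg prog x = runProg prog y := by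
      rw [hsplit, runProg_append, runProg_append, hxy]
    rw [hprog, hprog] at h1
    funext i
    have h2 := congrFun h1 (σ.symm i)
    simpa using h2
  -- every moved index is written at least once
  have hA : ∀ i ∈ σ.support, 1 ≤ cnt i := by
    intro i hi
    by_contra h
    have h0 : cnt i = 0 := by omega
    have hnw : ∀ p ∈ prog, p.2 ≠ i := by
      intro p hp hpi
      have hmem : i ∈ prog.map Prod.snd := List.mem_map.2 ⟨p, hp, hpi⟩
      have := List.count_pos_iff.2 hmem
      simp only [hcnt] at h0
      omega
    have hσi : σ i ≠ i := Equiv.Perm.mem_support.1 hi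
    have hx := congrFun (hprog (Function.update (fun _ => a) i b)) i
    rw [runProg_no_write _ _ hnw] at hx
    rw [Function.update_self, Function.update_of_ne hσi] at hx
    exact hab hx.symm
  -- every nontrivial cycle contains an index written at least twice
  have hB : ∀ τ ∈ σ.cycleFactorsFinset, ∃ i ∈ τ.support, 2 ≤ cnt i := by
    intro τ hτ
    by_contra hcon
    push_neg at hcon
    obtain ⟨hc, hτσ⟩ := (Equiv.Perm.mem_cycleFactorsFinset_iff).1 hτ
    have hsub : τ.support ⊆ σ.support := by
      intro u hu
      have := Equiv.Perm.mem_support.1 hu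
      rw [hτσ u hu] at this
      exact Equiv.Perm.mem_support.2 this
    have hcnt1 : ∀ i ∈ τ.support, cnt i = 1 := fun i hi =>
      le_antisymm (by have := hcon i hi; omega) (hA i (hsub hi))
    have hclos' : ∀ u ∈ τ.support, σ.symm u ∈ τ.support := by
      intro u hu
      have h1 : τ⁻¹ u ∈ τ.support := by
        rw [← Equiv.Perm.support_inv] at hu ⊢
        exact Equiv.Perm.apply_mem_support.2 hu
      have h2 : σ (τ⁻¹ u) = u := by
        rw [← hτσ _ h1]; simp
      have h3 : σ.symm u = τ⁻¹ u := by
        apply σ.injective; rw [Equiv.apply_symm_apply, h2]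
      rw [h3]; exact h1
    -- positions writing into τ.support
    have hFne : (Finset.univ.filter
        (fun k : Fin prog.length => (prog.get k).2 ∈ τ.support)).Nonempty := by
      obtain ⟨i₀, hi₀⟩ := hc.nonempty_support
      have h1 : 1 ≤ cnt i₀ := hA i₀ (hsub hi₀)
      have hmem : i₀ ∈ prog.map Prod.snd := by
        rw [← List.count_pos_iff]; simp only [hcnt] at h1 ⊢; omega
      obtain ⟨p, hp, hpi⟩ := List.mem_map.1 hmem
      obtain ⟨k, hk, hpk⟩ := List.mem_iff_getElem.1 hp
      exact ⟨⟨k, hk⟩, Finset.mem_filter.2 ⟨Finset.mem_univ _, by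
        simp only [List.get_eq_getElem, hpk, hpi]; exact hi₀⟩⟩
    set F := Finset.univ.filter
        (fun k : Fin prog.length => (prog.get k).2 ∈ τ.support) with hF
    set t := F.max' hFne with ht
    have htmem : t ∈ F := F.max'_mem hFne
    have htmax : ∀ u ∈ F, u ≤ t := fun u hu => F.le_max' u hu
    set j := (prog.get t).2 with hjdef
    have hj : j ∈ τ.support := (Finset.mem_filter.1 htmem).2
    set k := σ.symm j with hkdef
    have hk : k ∈ τ.support := hclos' j hj
    have hσk : σ k = j := by simp [hkdef]
    have hkj : k ≠ j := by
      intro h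
      exact Equiv.Perm.mem_support.1 (hsub hj) (by rw [← h] at hσk ⊢; rw [hσk, h])
    set l₁ := prog.take (t : ℕ) with hl₁
    set l₂ := prog.drop (t : ℕ) with hl₂
    have hsplit : prog = l₁ ++ l₂ := (List.take_append_drop _ _).symm
    have hl₂cons : l₂ = prog.get t :: prog.drop ((t : ℕ) + 1) := by
      rw [hl₂, List.drop_eq_getElem_cons t.isLt]; rfl
    -- no write to j in l₁
    have hnwj : ∀ p ∈ l₁, p.2 ≠ j := by
      intro p hp hpj
      have h1 : 1 ≤ (l₁.map Prod.snd).count j :=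
        List.count_pos_iff.2 (List.mem_map.2 ⟨p, hp, hpj⟩)
      have h2 : 1 ≤ (l₂.map Prod.snd).count j := by
        apply List.count_pos_iff.2
        rw [hl₂cons]
        exact List.mem_map.2 ⟨prog.get t, List.mem_cons_self, rfl⟩
      have h3 : cnt j = (l₁.map Prod.snd).count j + (l₂.map Prod.snd).count j := by
        show (prog.map Prod.snd).count j = _
        conv_lhs => rw [hsplit]
        rw [List.map_append, List.count_append]
      have h4 := hcnt1 j hj
      omega
    -- no write to k in l₂
    have hnwk : ∀ p ∈ l₂, p.2 ≠ k := by
      intro p hp hpk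
      rw [hl₂cons] at hp
      rcases List.mem_cons.1 hp with h | h
      · exact hkj (by rw [← hpk, h])
      · obtain ⟨s, hs, hps⟩ := List.mem_iff_getElem.1 h
        have hlen : (t : ℕ) + 1 + s < prog.length := by
          have := hs
          rw [List.length_drop] at this
          omega
        have hup : prog[(t : ℕ) + 1 + s] = p := by
          rw [← hps, List.getElem_drop]
        have humem : (⟨(t : ℕ) + 1 + s, hlen⟩ : Fin prog.length) ∈ F := by
          apply Finset.mem_filter.2
          refine ⟨Finset.mem_univ _, ?_⟩
          simp only [List.get_eq_getElem, hup, hpk]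
          exact hk
        have := htmax _ humem
        rw [Fin.le_def] at this
        simp only at this
        omega
    -- derive the contradiction
    have hg := hinj l₁ l₂ hsplit
    have hsurj : Function.Surjective (runProg l₁) :=
      Finite.injective_iff_surjective.1 hg
    obtain ⟨x, hx⟩ := hsurj (Function.update (fun _ => a) k b)
    have e1 : runProg l₁ x j = x j := runProg_no_write _ _ hnwj x
    have e2 : runProg l₁ x k = x j := by
      have h3 : runProg prog x k = runProg l₁ x k := by
        conv_lhs => rw [hsplit]
        rw [runProg_append]
        exact runProg_no_write l₂ k hnwk _
      have h4 : runProg prog x k = x j := by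
        rw [hprog]; simp only [hσk]
      rw [← h3, h4]
    have e3 : runProg l₁ x j = runProg l₁ x k := by rw [e1, e2]
    rw [hx, Function.update_of_ne (Ne.symm hkj), Function.update_self] at e3
    exact hab e3
  -- counting
  have hsum : ∑ i, cnt i = prog.length := by
    have h1 := Multiset.toFinset_sum_count_eq (↑(prog.map Prod.snd) : Multiset (Fin n))
    have h2 : ∑ i ∈ (↑(prog.map Prod.snd) : Multiset (Fin n)).toFinset,
        Multiset.count i (↑(prog.map Prod.snd) : Multiset (Fin n))
        = ∑ i, Multiset.count i (↑(prog.map Prod.snd) : Multiset (Fin n)) :=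
      Finset.sum_subset (Finset.subset_univ _)
        (fun i _ hi => Multiset.count_eq_zero.2
          (fun h => hi (Multiset.mem_toFinset.2 h)))
    have h3 : ∑ i, cnt i = ∑ i, Multiset.count i (↑(prog.map Prod.snd) : Multiset (Fin n)) := by
      simp [hcnt]
    rw [h3, ← h2, h1]
    simp
  set D := σ.support.filter (fun i => 2 ≤ cnt i) with hD
  have hDsub : D ⊆ σ.support := Finset.filter_subset _ _
  have hCF : σ.cycleFactorsFinset ⊆ D.image σ.cycleOf := by
    intro τ hτ
    obtain ⟨i, hi, h2⟩ := hB τ hτ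
    have hsub : i ∈ σ.support := by
      obtain ⟨hc, hτσ⟩ := (Equiv.Perm.mem_cycleFactorsFinset_iff).1 hτ
      have := Equiv.Perm.mem_support.1 hi
      rw [hτσ i hi] at this
      exact Equiv.Perm.mem_support.2 this
    exact Finset.mem_image.2 ⟨i, Finset.mem_filter.2 ⟨hsub, h2⟩,
      (Equiv.Perm.cycle_is_cycleOf hi hτ).symm⟩
  have hcle : σ.cycleType.card ≤ D.card := by
    have h1 : σ.cycleType.card = σ.cycleFactorsFinset.card := by
      rw [Equiv.Perm.cycleType_def, Multiset.card_map]; rfl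
    calc σ.cycleType.card = σ.cycleFactorsFinset.card := h1
      _ ≤ (D.image σ.cycleOf).card := Finset.card_le_card hCF
      _ ≤ D.card := Finset.card_image_le
  have hfix : (Finset.univ.filter fun i => σ i = i).card + σ.support.card = n := by
    have := Finset.card_filter_add_card_filter_not
      (s := (Finset.univ : Finset (Fin n))) (fun i => σ i = i)
    simp only [Finset.card_univ, Fintype.card_fin] at this
    have hsupp : σ.support = Finset.univ.filter (fun i => ¬ σ i = i) := rfl
    rw [hsupp]
    exact this
  -- sum over support splits
  have hsdiff : ∑ i ∈ σ.support \ D, cnt i + ∑ i ∈ D, cnt i = ∑ i ∈ σ.support, cnt i :=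
    Finset.sum_sdiff hDsub
  have hDbound : 2 * D.card ≤ ∑ i ∈ D, cnt i := by
    have := Finset.card_nsmul_le_sum D cnt 2 (fun i hi => (Finset.mem_filter.1 hi).2)
    simpa [mul_comm, smul_eq_mul] using this
  have hSDbound : σ.support.card - D.card ≤ ∑ i ∈ σ.support \ D, cnt i := by
    have h1 : (σ.support \ D).card ≤ ∑ i ∈ σ.support \ D, cnt i := by
      have := Finset.card_nsmul_le_sum (σ.support \ D) cnt 1
        (fun i hi => hA i (Finset.mem_sdiff.1 hi).1)
      simpa using this
    rw [Finset.card_sdiff_of_subset hDsub] at h1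
    exact h1
  have hDle : D.card ≤ σ.support.card := Finset.card_le_card hDsub
  have htot : ∑ i ∈ σ.support, cnt i ≤ prog.length := by
    rw [← hsum]
    exact Finset.sum_le_sum_of_subset (Finset.subset_univ _)
  omega
end

section
/- Let S be an abelian group and n = k ≥ 2. The cyclic shift mapping E : S^k → S^k, E(x_1,...,x_k) = (x_2,...,x_k,x_1), is computed by the in situ program of length k+1 given by: x_1 := x_1 + x_2 + ... + x_k; then for i = k, k-1, ..., 2 in decreasing order: x_i := x_1 - x_2 - ... - x_k (where the values used are the current values of the variables at each step). -/
section Aux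

open Fin.NatCast

variable {S : Type*} [AddCommGroup S] {k : ℕ} (x : Fin (k + 2) → S)

/-- The state after the first assignment and then the assignments at
positions `k+1, k, …, m`. -/
private def wAux (m : ℕ) : Fin (k + 2) → S :=
  fun j => if (j : ℕ) < m then (if j = 0 then ∑ i, x i else x j) else x (j + 1)

private lemma wAux_succ (m : ℕ) (hm : m ≤ k + 1) :
    wAux x m = Function.update (wAux x (m + 1)) ((m : Fin (k + 2)))
      (x (((m + 1 : ℕ) : Fin (k + 2)))) := by
  have hmval : (((m : Fin (k + 2))) : ℕ) = m := by
    rw [Fin.val_natCast]; exact Nat.mod_eq_of_lt (by omega)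
  funext j
  by_cases hj : (j : ℕ) = m
  · have hj' : j = (m : Fin (k + 2)) := Fin.ext (by omega)
    subst hj'
    rw [Function.update_self, wAux]
    have : ¬ ((((m : Fin (k+2))) : ℕ) < m) := by omega
    rw [if_neg this]
    congr 1
    push_cast
    ring
  · have hne : j ≠ (m : Fin (k + 2)) := fun h => hj (by rw [h, hmval])
    rw [Function.update_of_ne hne, wAux, wAux]
    by_cases h2 : (j : ℕ) < m
    · rw [if_pos h2, if_pos (show (j : ℕ) < m + 1 by omega)]
    · rw [if_neg h2, if_neg (show ¬ (j : ℕ) < m + 1 by omega)]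

private lemma sum_wAux (m : ℕ) (h1 : 1 ≤ m) (h2 : m ≤ k + 2) :
    ∑ j ∈ Finset.univ.erase (0 : Fin (k + 2)), wAux x m j
      = (∑ i, x i) - x ((m : Fin (k + 2))) := by
  obtain ⟨d, hd⟩ : ∃ d, m + d = k + 2 := ⟨k + 2 - m, by omega⟩
  induction d generalizing m with
  | zero =>
    have hm : m = k + 2 := by omega
    subst hm
    have hcast : (((k + 2 : ℕ) : Fin (k + 2))) = 0 := by
      exact_mod_cast Fin.natCast_self (k + 2)
    rw [hcast]
    rw [show (∑ j ∈ Finset.univ.erase (0 : Fin (k + 2)), wAux x (k + 2) j)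
        = ∑ j ∈ Finset.univ.erase (0 : Fin (k + 2)), x j from
      Finset.sum_congr rfl (fun j hj => by
        rw [wAux, if_pos j.isLt, if_neg (Finset.mem_erase.mp hj).1])]
    rw [Finset.sum_erase_eq_sub (Finset.mem_univ _)]
  | succ d ih =>
    have hm : m ≤ k + 1 := by omega
    have hmval : (((m : Fin (k + 2))) : ℕ) = m := by
      rw [Fin.val_natCast]; exact Nat.mod_eq_of_lt (by omega)
    have hmem : (m : Fin (k + 2)) ∈ Finset.univ.erase (0 : Fin (k + 2)) :=
      Finset.mem_erase.mpr ⟨fun h => by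
        have := congrArg Fin.val h
        rw [hmval] at this
        simp at this; omega, Finset.mem_univ _⟩
    rw [wAux_succ x m hm, Finset.sum_update_of_mem hmem, ← Finset.erase_eq,
      Finset.sum_erase_eq_sub hmem, ih (m + 1) (by omega) (by omega) (by omega)]
    have hval : wAux x (m + 1) ((m : Fin (k + 2))) = x ((m : Fin (k + 2))) := by
      rw [wAux, if_pos (by omega), if_neg (Finset.mem_erase.mp hmem).1]
    rw [hval]
    abel

private lemma step_wAux (m : ℕ) (hm : m ≤ k + 1) :
    Function.update (wAux x (m + 1)) ((m : Fin (k + 2)))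
      (wAux x (m + 1) 0 - ∑ j ∈ Finset.univ.erase (0 : Fin (k + 2)), wAux x (m + 1) j)
      = wAux x m := by
  have h0 : wAux x (m + 1) 0 = ∑ i, x i := by
    rw [wAux, if_pos (by simp), if_pos rfl]
  rw [h0, sum_wAux x (m + 1) (by omega) (by omega), sub_sub_cancel,
    wAux_succ x m hm]

private lemma fold_wAux (m : ℕ) (hm : m ≤ k + 2) :
    List.foldl
      (fun v (i : Fin (k + 2)) => Function.update v i
        (v 0 - ∑ j ∈ Finset.univ.erase (0 : Fin (k + 2)), v j))
      (wAux x m) ((List.range m).reverse.map (fun i : ℕ => (i : Fin (k + 2))))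
      = wAux x 0 := by
  induction m with
  | zero => simp
  | succ m ih =>
    rw [List.range_succ, List.reverse_append, List.reverse_singleton]
    simp only [List.singleton_append, List.map_cons, List.foldl_cons]
    rw [step_wAux x m (by omega)]
    exact ih (by omega)

private lemma finRange_eq : List.finRange (k + 2)
    = (List.range (k + 2)).map (fun i : ℕ => (i : Fin (k + 2))) := by
  apply List.ext_getElem
  · simp
  · intro i h1 h2
    have hi : i < k + 2 := by simpa using h1
    simp only [List.getElem_finRange, List.getElem_map, List.getElem_range]
    apply Fin.ext
    simp [Fin.val_natCast, Nat.mod_eq_of_lt hi]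

end Aux

/-- The cyclic shift `(x_1,…,x_k) ↦ (x_2,…,x_k,x_1)` on a power of an abelian
group (here `k + 2` variables, so `k ≥ 2` in the paper's notation) is computed
by the in situ program of length `k+1`:
`x_1 := x_1 + ⋯ + x_k;` then, for `i` decreasing, `x_i := x_1 - x_2 - ⋯ - x_k`. -/
theorem cyclic_shift_insitu (S : Type*) [AddCommGroup S] (k : ℕ)
    (x : Fin (k + 2) → S) :
    runProg
      (((fun v : Fin (k + 2) → S => ∑ j, v j), (0 : Fin (k + 2))) ::
        (List.finRange (k + 2)).reverse.map
          (fun i => ((fun v : Fin (k + 2) → S =>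
            v 0 - ∑ j ∈ Finset.univ.erase (0 : Fin (k + 2)), v j), i))) x
      = fun i => x (i + 1) := by
  rw [runProg, List.foldl_cons, List.foldl_map]
  have hinit : Function.update x (0 : Fin (k + 2)) (∑ j, x j) = wAux x (k + 2) := by
    funext j
    by_cases hj : j = 0
    · subst hj; rw [Function.update_self, wAux, if_pos (by simp), if_pos rfl]
    · rw [Function.update_of_ne hj, wAux, if_pos j.isLt, if_neg hj]
  rw [hinit, finRange_eq, ← List.map_reverse]
  exact (fold_wAux x (k + 2) le_rfl).trans (by funext j; simp [wAux])
end

section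
/- Let S = {0,...,s-1} with s ≥ 2, and identify S^n with the interval [0, s^n - 1] via the index map φ(x_1,...,x_n) = x_1 + s·x_2 + ... + s^{n-1}·x_n. Let I : S^n → S^n be distance-compatible, i.e., |φ(I(X)) - φ(I(Y))| ≤ |φ(X) - φ(Y)| for all X, Y. Then I is computed by an in situ program p_1, p_2, ..., p_n with signature 1,2,...,n, where for each i and each x with I(x) = y, p_i(y_1,...,y_{i-1},x_i,...,x_n) = y_i; in particular these partial-definition formulas are consistent (no vector is assigned two different values). -/
/-- Index of a vector in `S^n`, `S = {0,…,s-1}`: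
`φ(x_1,…,x_n) = x_1 + s·x_2 + ⋯ + s^{n-1}·x_n` (0-indexed here). -/
def idx {n s : ℕ} (x : Fin n → Fin s) : ℕ := ∑ i, (x i : ℕ) * s ^ (i : ℕ)

lemma idx_succ {n s : ℕ} (x : Fin (n+1) → Fin s) :
    idx x = (x 0 : ℕ) + s * idx (fun i => x i.succ) := by
  unfold idx
  rw [Fin.sum_univ_succ, Finset.mul_sum]
  congr 1
  · simp
  · refine Finset.sum_congr rfl fun i _ => ?_
    simp [pow_succ]; ring

lemma idx_inj {s : ℕ} (hs : 1 ≤ s) : ∀ {n : ℕ} (x y : Fin n → Fin s),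
    idx x = idx y → x = y := by
  intro n
  induction n with
  | zero => intro x y _; funext j; exact absurd j.2 (Nat.not_lt_zero _)
  | succ n ih =>
    intro x y h
    rw [idx_succ x, idx_succ y] at h
    have hx0 : (x 0 : ℕ) < s := (x 0).2
    have hy0 : (y 0 : ℕ) < s := (y 0).2
    have h0 : (x 0 : ℕ) = (y 0 : ℕ) := by
      have := congrArg (· % s) h
      simpa [Nat.add_mul_mod_self_left, Nat.mod_eq_of_lt hx0, Nat.mod_eq_of_lt hy0] using this
    have h1 : idx (fun i => x i.succ) = idx (fun i => y i.succ) := by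
      have := congrArg (· / s) h
      simpa [Nat.add_mul_div_left _ _ hs, Nat.div_eq_of_lt hx0, Nat.div_eq_of_lt hy0] using this
    have ht := ih _ _ h1
    funext j
    refine Fin.cases ?_ ?_ j
    · exact Fin.ext h0
    · intro i; exact congrFun ht i

lemma idx_high {s : ℕ} (hs : 1 ≤ s) : ∀ {n : ℕ} (i : ℕ) (x y : Fin n → Fin s),
    (∀ j : Fin n, i ≤ (j : ℕ) → x j = y j) →
    |(idx x : ℤ) - idx y| ≤ (s : ℤ) ^ i - 1 := by
  intro n
  induction n with
  | zero =>
    intro i x y _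
    have : (1:ℤ) ≤ (s:ℤ)^i := one_le_pow₀ (by exact_mod_cast hs)
    simp [idx]; linarith
  | succ n ih =>
    intro i x y h
    match i with
    | 0 =>
      have : x = y := funext fun j => h j (Nat.zero_le _)
      simp [this]
    | k + 1 =>
      rw [idx_succ x, idx_succ y]
      push_cast
      have hx0 : ((x 0 : ℕ) : ℤ) < s := by exact_mod_cast (x 0).2
      have hy0 : ((y 0 : ℕ) : ℤ) < s := by exact_mod_cast (y 0).2
      have hab : |((x 0 : ℕ) : ℤ) - (y 0 : ℕ)| ≤ (s:ℤ) - 1 := by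
        rw [abs_le]
        constructor <;> [nlinarith [Int.ofNat_nonneg (x 0 : ℕ)]; nlinarith [Int.ofNat_nonneg (y 0 : ℕ)]]
      have hAB := ih k (fun i => x i.succ) (fun i => y i.succ)
        (fun j hj => h j.succ (by simpa using Nat.succ_le_succ hj))
      have hs0 : (0:ℤ) ≤ s := by positivity
      calc |(((x 0 : ℕ) : ℤ) + s * idx (fun i => x i.succ)) - (((y 0 : ℕ) : ℤ) + s * idx (fun i => y i.succ))|
          ≤ |((x 0 : ℕ) : ℤ) - (y 0 : ℕ)| + |(s:ℤ) * ((idx (fun i => x i.succ) : ℤ) - idx (fun i => y i.succ))| := by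
            rw [mul_sub]; exact (abs_add_le _ _).trans_eq' (by ring_nf)
        _ ≤ ((s:ℤ) - 1) + s * ((s:ℤ)^k - 1) := by
            rw [abs_mul, abs_of_nonneg hs0]
            exact add_le_add hab (mul_le_mul_of_nonneg_left hAB hs0)
        _ = (s:ℤ)^(k+1) - 1 := by ring

lemma idx_low {s : ℕ} : ∀ {n : ℕ} (i : ℕ) (x y : Fin n → Fin s),
    (∀ j : Fin n, (j : ℕ) < i → x j = y j) →
    (s : ℤ) ^ i ∣ (idx x : ℤ) - idx y := by
  intro n
  induction n with
  | zero => intro i x y _; simp [idx]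
  | succ n ih =>
    intro i x y h
    match i with
    | 0 => simp
    | k + 1 =>
      rw [idx_succ x, idx_succ y]
      have h0 : x 0 = y 0 := h 0 (Nat.succ_pos k)
      have hd := ih k (fun i => x i.succ) (fun i => y i.succ)
        (fun j hj => h j.succ (by simpa using Nat.succ_lt_succ hj))
      push_cast
      rw [h0]
      have : ((y 0 : ℕ) : ℤ) + s * idx (fun i => x i.succ) - (((y 0 : ℕ) : ℤ) + s * idx (fun i => y i.succ))
          = s * ((idx (fun i => x i.succ) : ℤ) - idx (fun i => y i.succ)) := by ring
      rw [this, pow_succ, mul_comm ((s:ℤ)^k) s]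
      exact mul_dvd_mul_left _ hd

/-- A distance-compatible mapping `I` on `S^n` is computed by an in situ
program `p_1,…,p_n` with signature `1,…,n`, where
`p_i(y_1,…,y_{i-1},x_i,…,x_n) = y_i` for `y = I(x)`; in particular these
partial definitions are consistent. -/
theorem distance_compatible_insitu
    (s n : ℕ) (hs : 2 ≤ s)
    (I : (Fin n → Fin s) → (Fin n → Fin s))
    (hI : ∀ x y : Fin n → Fin s,
      |(idx (I x) : ℤ) - (idx (I y) : ℤ)| ≤ |(idx x : ℤ) - (idx y : ℤ)|) :
    ∃ p : Fin n → ((Fin n → Fin s) → Fin s),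
      (∀ x, (List.finRange n).foldl
          (fun v i => Function.update v i (p i v)) x = I x) ∧
      (∀ (i : Fin n) (x : Fin n → Fin s),
        p i (fun j => if (j : ℕ) < (i : ℕ) then I x j else x j) = I x i) := by
  have hs1 : 1 ≤ s := le_trans (by norm_num) hs
  have key : ∀ (i : ℕ) (x x' : Fin n → Fin s),
      (∀ j : Fin n, (j : ℕ) < i → I x j = I x' j) →
      (∀ j : Fin n, i ≤ (j : ℕ) → x j = x' j) → I x = I x' := by
    intro i x x' hlow hhigh
    have h1 : |(idx (I x) : ℤ) - idx (I x')| ≤ (s:ℤ)^i - 1 :=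
      (hI x x').trans (idx_high hs1 i x x' hhigh)
    have h2 : (s:ℤ)^i ∣ (idx (I x) : ℤ) - idx (I x') := idx_low i (I x) (I x') hlow
    have h3 : |(idx (I x) : ℤ) - idx (I x')| < (s:ℤ)^i := lt_of_le_of_lt h1 (by linarith)
    have h4 : (idx (I x) : ℤ) - idx (I x') = 0 := Int.eq_zero_of_abs_lt_dvd h2 h3
    exact idx_inj hs1 _ _ (by omega)
  classical
  set mix : ℕ → (Fin n → Fin s) → (Fin n → Fin s) :=
    fun i x j => if (j : ℕ) < i then I x j else x j with hmix
  set p : Fin n → ((Fin n → Fin s) → Fin s) :=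
    fun i v => if h : ∃ x, mix (i : ℕ) x = v then I h.choose i else v i with hp
  have consist : ∀ (i : Fin n) (x : Fin n → Fin s), p i (mix (i : ℕ) x) = I x i := by
    intro i x
    rw [hp]
    simp only
    rw [dif_pos ⟨x, rfl⟩]
    have hx0 := (⟨x, rfl⟩ : ∃ x', mix (i : ℕ) x' = mix (i : ℕ) x).choose_spec
    set x₀ := (⟨x, rfl⟩ : ∃ x', mix (i : ℕ) x' = mix (i : ℕ) x).choose
    have heq : I x₀ = I x := by
      apply key (i : ℕ)
      · intro j hj
        have := congrFun hx0 j
        simpa [hmix, hj] using this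
      · intro j hj
        have := congrFun hx0 j
        simpa [hmix, Nat.not_lt.mpr hj] using this
    rw [heq]
  refine ⟨p, ?_, ?_⟩
  · intro x
    have step : ∀ (k : ℕ), k ≤ n →
        (List.foldl (fun (v : Fin n → Fin s) (i : Fin n) => Function.update v i (p i v))
          (mix k x) ((List.finRange n).drop k)) = I x := by
      intro k hk
      induction' hn : n - k with m ih generalizing k
      · have hkn : k = n := by omega
        subst hkn
        rw [List.drop_eq_nil_of_le (by simp)]
        simp only [List.foldl_nil]
        funext j
        simp [hmix, j.2]
      · have hklt : k < n := by omega
        rw [List.drop_eq_getElem_cons (by simpa using hklt)]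
        have hget : (List.finRange n)[k]'(by simpa using hklt) = ⟨k, hklt⟩ := by
          simp [Fin.ext_iff]
        rw [hget, List.foldl_cons]
        have hupd : Function.update (mix k x) ⟨k, hklt⟩ (p ⟨k, hklt⟩ (mix k x)) = mix (k+1) x := by
          rw [show p ⟨k, hklt⟩ (mix k x) = I x ⟨k, hklt⟩ from consist ⟨k, hklt⟩ x]
          funext j
          rcases eq_or_ne j ⟨k, hklt⟩ with h | h
          · subst h; simp [hmix]
          · rw [Function.update_of_ne h]
            have hjk : (j : ℕ) ≠ k := fun hc => h (Fin.ext hc)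
            by_cases hlt : (j : ℕ) < k
            · simp [hmix, hlt, Nat.lt_succ_of_lt hlt]
            · simp [hmix, hlt, show ¬ (j:ℕ) < k + 1 by omega]
        rw [hupd]
        exact ih (k+1) (by omega) (by omega)
    have h0 : mix 0 x = x := by funext j; simp [hmix]
    have := step 0 (Nat.zero_le n)
    rw [List.drop_zero, h0] at this
    exact this
  · intro i x
    exact consist i x
end

section
/- Every sequence of 2^n non-negative integers whose sum equals 2^n can be reordered into a block-sequence: there exists a permutation π of {0,...,2^n - 1} such that the reordered sequence w_l = v_{π(l)} satisfies, for every i with 0 ≤ i ≤ n and every j with 0 ≤ j < 2^{n-i}, that the sum of w_l over j·2^i ≤ l < (j+1)·2^i is divisible by 2^i. -/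
open Finset

private lemma sum_range_double (g : ℕ → ℕ) (k : ℕ) :
    ∑ m ∈ range (2 * k), g m = ∑ q ∈ range k, (g (2 * q) + g (2 * q + 1)) := by
  induction k with
  | zero => simp
  | succ k ih =>
    have h : 2 * (k + 1) = (2 * k + 1) + 1 := by ring
    rw [h, sum_range_succ, sum_range_succ, ih, sum_range_succ, add_assoc]

private lemma sum_Ico_double (g : ℕ → ℕ) (a b : ℕ) :
    ∑ m ∈ Finset.Ico (2 * a) (2 * b), g m
      = ∑ q ∈ Finset.Ico a b, (g (2 * q) + g (2 * q + 1)) := by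
  rcases le_or_gt a b with hab | hab
  · rw [Finset.sum_Ico_eq_sum_range, Finset.sum_Ico_eq_sum_range]
    have h1 : 2 * b - 2 * a = 2 * (b - a) := by omega
    rw [h1, sum_range_double]
    refine Finset.sum_congr rfl fun q _ => ?_
    have e1 : 2 * a + 2 * q = 2 * (a + q) := by ring
    have e2 : 2 * a + (2 * q + 1) = 2 * (a + q) + 1 := by ring
    rw [e1, e2]
  · rw [Finset.Ico_eq_empty (by omega), Finset.Ico_eq_empty (by omega)]
    simp

private lemma sum_filter_Ico {N : ℕ} (f : Fin N → ℕ) (a b : ℕ) (hb : b ≤ N) :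
    ∑ l ∈ Finset.univ.filter (fun l : Fin N => a ≤ (l : ℕ) ∧ (l : ℕ) < b), f l
      = ∑ m ∈ Finset.Ico a b, (if h : m < N then f ⟨m, h⟩ else 0) := by
  rw [Finset.sum_filter]
  have h1 : ∀ l : Fin N,
      (if a ≤ (l : ℕ) ∧ (l : ℕ) < b then f l else 0)
        = (fun m => if a ≤ m ∧ m < b then (if h : m < N then f ⟨m, h⟩ else 0) else 0) (l : ℕ) := by
    intro l
    simp only [l.isLt, dif_pos, Fin.eta]
  rw [Finset.sum_congr rfl fun l _ => h1 l,
    Fin.sum_univ_eq_sum_range (fun m => if a ≤ m ∧ m < b then (if h : m < N then f ⟨m, h⟩ else 0) else 0) N,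
    ← Finset.sum_filter]
  apply Finset.sum_congr _ fun _ _ => rfl
  ext m
  simp only [Finset.mem_filter, Finset.mem_range, Finset.mem_Ico]
  omega

private def dLift {N m : ℕ} (hN : N = 2 * m) (ρ : Fin m → Fin m) (l : Fin N) : Fin N :=
  ⟨2 * (ρ ⟨(l : ℕ) / 2, by have := l.isLt; omega⟩ : Fin m) + (l : ℕ) % 2, by
    have := (ρ ⟨(l : ℕ) / 2, by have := l.isLt; omega⟩).isLt; omega⟩

private lemma dLift_val {N m : ℕ} (hN : N = 2 * m) (ρ : Fin m → Fin m) (l : Fin N)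
    (h : (l : ℕ) / 2 < m) :
    (dLift hN ρ l : ℕ) = 2 * (ρ ⟨(l : ℕ) / 2, h⟩ : ℕ) + (l : ℕ) % 2 := rfl

private lemma dLift_inv {N m : ℕ} (hN : N = 2 * m) (ρ σ : Fin m → Fin m)
    (hcomp : ∀ x, σ (ρ x) = x) (l : Fin N) : dLift hN σ (dLift hN ρ l) = l := by
  have hl := l.isLt
  have h2 : (l : ℕ) / 2 < m := by omega
  have h : ((dLift hN ρ l : Fin N) : ℕ) / 2 < m := by
    have := (dLift hN ρ l).isLt; omega
  apply Fin.ext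
  rw [dLift_val hN σ _ h]
  have h3 : (⟨((dLift hN ρ l : Fin N) : ℕ) / 2, h⟩ : Fin m) = ρ ⟨(l : ℕ) / 2, h2⟩ := by
    apply Fin.ext
    show ((dLift hN ρ l : Fin N) : ℕ) / 2 = _
    rw [dLift_val hN ρ l h2]
    omega
  rw [h3, hcomp]
  have h4 : ((dLift hN ρ l : Fin N) : ℕ) % 2 = (l : ℕ) % 2 := by
    rw [dLift_val hN ρ l h2]; omega
  rw [h4]
  show 2 * ((l : ℕ) / 2) + (l : ℕ) % 2 = (l : ℕ)
  omega

private def dPerm {N m : ℕ} (hN : N = 2 * m) (ρ : Equiv.Perm (Fin m)) : Equiv.Perm (Fin N) where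
  toFun := dLift hN ρ
  invFun := dLift hN ρ.symm
  left_inv l := dLift_inv hN ρ ρ.symm (fun x => ρ.symm_apply_apply x) l
  right_inv l := dLift_inv hN ρ.symm ρ (fun x => ρ.apply_symm_apply x) l

private lemma dPerm_apply {N m : ℕ} (hN : N = 2 * m) (ρ : Equiv.Perm (Fin m)) (l : Fin N) :
    (dPerm hN ρ) l = dLift hN ρ l := rfl

private lemma dPerm_val0 {N m : ℕ} (hN : N = 2 * m) (ρ : Equiv.Perm (Fin m)) (q : ℕ)
    (hq : q < m) (h : 2 * q < N) :
    dPerm hN ρ ⟨2 * q, h⟩ = ⟨2 * (ρ ⟨q, hq⟩ : ℕ), by have := (ρ ⟨q, hq⟩).isLt; omega⟩ := by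
  apply Fin.ext
  rw [dPerm_apply]
  rw [dLift_val hN ρ _ (show ((⟨2 * q, h⟩ : Fin N) : ℕ) / 2 < m by show 2 * q / 2 < m; omega)]
  show 2 * (ρ ⟨2 * q / 2, _⟩ : ℕ) + 2 * q % 2 = 2 * (ρ ⟨q, hq⟩ : ℕ)
  have he : (⟨2 * q / 2, by omega⟩ : Fin m) = ⟨q, hq⟩ := by
    apply Fin.ext; show 2 * q / 2 = q; omega
  rw [he]
  omega

private lemma dPerm_val1 {N m : ℕ} (hN : N = 2 * m) (ρ : Equiv.Perm (Fin m)) (q : ℕ)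
    (hq : q < m) (h : 2 * q + 1 < N) :
    dPerm hN ρ ⟨2 * q + 1, h⟩ = ⟨2 * (ρ ⟨q, hq⟩ : ℕ) + 1, by
      have := (ρ ⟨q, hq⟩).isLt; omega⟩ := by
  apply Fin.ext
  rw [dPerm_apply]
  rw [dLift_val hN ρ _ (show ((⟨2 * q + 1, h⟩ : Fin N) : ℕ) / 2 < m by
    show (2 * q + 1) / 2 < m; omega)]
  show 2 * (ρ ⟨(2 * q + 1) / 2, _⟩ : ℕ) + (2 * q + 1) % 2 = 2 * (ρ ⟨q, hq⟩ : ℕ) + 1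
  have he : (⟨(2 * q + 1) / 2, by omega⟩ : Fin m) = ⟨q, hq⟩ := by
    apply Fin.ext; show (2 * q + 1) / 2 = q; omega
  rw [he]
  omega

private lemma block_aux : ∀ n : ℕ, ∀ w : Fin (2 ^ n) → ℕ, (2 ^ n ∣ ∑ l, w l) →
    ∃ π : Equiv.Perm (Fin (2 ^ n)),
      ∀ i ≤ n, ∀ j < 2 ^ (n - i),
        2 ^ i ∣ ∑ l ∈ Finset.univ.filter
          (fun l : Fin (2 ^ n) => j * 2 ^ i ≤ (l : ℕ) ∧ (l : ℕ) < (j + 1) * 2 ^ i),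
          w (π l) := by
  intro n
  induction n with
  | zero =>
    intro w _
    refine ⟨Equiv.refl _, ?_⟩
    intro i hi j hj
    interval_cases i
    simpa using one_dvd _
  | succ k ih =>
    intro w hw
    classical
    have hN : 2 ^ (k + 1) = 2 * 2 ^ k := by rw [pow_succ]; ring
    set c := (Finset.univ.filter (fun l : Fin (2 ^ (k + 1)) => Odd (w l))).card with hc
    have hcle : c ≤ 2 ^ (k + 1) := by
      calc c ≤ (Finset.univ : Finset (Fin (2 ^ (k + 1)))).card := Finset.card_filter_le _ _
        _ = 2 ^ (k + 1) := by simp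
    have hceven : Even c := by
      rw [← Finset.even_sum_iff_even_card_odd w]
      obtain ⟨t, ht⟩ := hw
      exact ⟨2 ^ k * t, by rw [ht, hN]; ring⟩
    -- a permutation sorting odd values to the front
    have hcard1 : Fintype.card {l : Fin (2 ^ (k + 1)) // (l : ℕ) < c} = c := by
      rw [Fintype.card_subtype]
      have heq : Finset.univ.filter (fun l : Fin (2 ^ (k + 1)) => (l : ℕ) < c)
          = (Finset.range c).attachFin
            (fun m hm => lt_of_lt_of_le (Finset.mem_range.mp hm) hcle) := by
        ext a
        simp [Finset.mem_attachFin]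
      rw [heq, Finset.card_attachFin, Finset.card_range]
    have hcard2 : Fintype.card {l : Fin (2 ^ (k + 1)) // Odd (w l)} = c := by
      rw [Fintype.card_subtype, hc]
    have e1 : {l : Fin (2 ^ (k + 1)) // (l : ℕ) < c} ≃ {l : Fin (2 ^ (k + 1)) // Odd (w l)} :=
      Fintype.equivOfCardEq (by rw [hcard1, hcard2])
    have e2 : {l : Fin (2 ^ (k + 1)) // ¬ (l : ℕ) < c} ≃ {l : Fin (2 ^ (k + 1)) // ¬ Odd (w l)} :=
      Fintype.equivOfCardEq (by
        rw [Fintype.card_subtype_compl, Fintype.card_subtype_compl, hcard1, hcard2])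
    set σ : Equiv.Perm (Fin (2 ^ (k + 1))) := Equiv.subtypeCongr e1 e2 with hσdef
    have hσ : ∀ l : Fin (2 ^ (k + 1)), Odd (w (σ l)) ↔ (l : ℕ) < c := by
      intro l
      by_cases h : (l : ℕ) < c
      · have : σ l = ↑(e1 ⟨l, h⟩) := by simp [hσdef, Equiv.subtypeCongr, h]
        rw [this]
        exact iff_of_true (e1 ⟨l, h⟩).2 h
      · have : σ l = ↑(e2 ⟨l, h⟩) := by simp [hσdef, Equiv.subtypeCongr, h]
        rw [this]
        exact iff_of_false (e2 ⟨l, h⟩).2 h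
    -- the natural-number extension of w ∘ σ
    set W : ℕ → ℕ := fun m => if h : m < 2 ^ (k + 1) then w (σ ⟨m, h⟩) else 0 with hW
    have hWval : ∀ (m : ℕ) (h : m < 2 ^ (k + 1)), W m = w (σ ⟨m, h⟩) := by
      intro m h; simp [hW, h]
    have hpair : ∀ q < 2 ^ k, Even (W (2 * q) + W (2 * q + 1)) := by
      intro q hq
      have h0 : 2 * q < 2 ^ (k + 1) := by omega
      have h1 : 2 * q + 1 < 2 ^ (k + 1) := by omega
      rw [hWval _ h0, hWval _ h1]
      obtain ⟨t, ht⟩ := hceven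
      have hiff : (((⟨2 * q, h0⟩ : Fin (2 ^ (k + 1))) : ℕ) < c)
          ↔ (((⟨2 * q + 1, h1⟩ : Fin (2 ^ (k + 1))) : ℕ) < c) := by
        show 2 * q < c ↔ 2 * q + 1 < c
        omega
      rw [Nat.even_add]
      rw [← Nat.not_odd_iff_even, ← Nat.not_odd_iff_even, hσ _, hσ _, not_iff_not]
      exact hiff
    -- the halved sequence
    set u : Fin (2 ^ k) → ℕ := fun q => (W (2 * (q : ℕ)) + W (2 * (q : ℕ) + 1)) / 2 with hu
    have h2u : ∀ q : Fin (2 ^ k), 2 * u q = W (2 * (q : ℕ)) + W (2 * (q : ℕ) + 1) := by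
      intro q
      obtain ⟨t, ht⟩ := hpair (q : ℕ) q.isLt
      simp [hu, ht]
      omega
    have hsumW : ∑ m ∈ Finset.range (2 ^ (k + 1)), W m = ∑ l, w l := by
      rw [← Fin.sum_univ_eq_sum_range W (2 ^ (k + 1))]
      rw [show (∑ l : Fin (2 ^ (k + 1)), W (l : ℕ)) = ∑ l : Fin (2 ^ (k + 1)), w (σ l) from
        Finset.sum_congr rfl fun l _ => by rw [hWval _ l.isLt]]
      exact Equiv.sum_comp σ w
    have husum : 2 ^ k ∣ ∑ q, u q := by
      have h2 : 2 * ∑ q, u q = ∑ l, w l := by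
        rw [← hsumW, hN, sum_range_double W (2 ^ k), ← Fin.sum_univ_eq_sum_range
          (fun q => W (2 * q) + W (2 * q + 1)) (2 ^ k), Finset.mul_sum]
        exact Finset.sum_congr rfl fun q _ => h2u q
      obtain ⟨t, ht⟩ := hw
      refine ⟨t, ?_⟩
      have : 2 * ∑ q, u q = 2 * (2 ^ k * t) := by rw [h2, ht, hN]; ring
      omega
    obtain ⟨ρ, hρ⟩ := ih u husum
    refine ⟨(dPerm hN ρ).trans σ, ?_⟩
    intro i hi j hj
    match i with
    | 0 =>
      simp only [pow_zero]
      exact one_dvd _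
    | (i' + 1) =>
      have hik : i' ≤ k := by omega
      have hj' : j < 2 ^ (k - i') := by
        have : k + 1 - (i' + 1) = k - i' := by omega
        rwa [this] at hj
      have hpow : 2 ^ (k - i') * 2 ^ (i' + 1) = 2 ^ (k + 1) := by
        rw [← pow_add]
        congr 1
        omega
      have hpow' : 2 ^ (k - i') * 2 ^ i' = 2 ^ k := by
        rw [← pow_add]
        congr 1
        omega
      have hb : (j + 1) * 2 ^ (i' + 1) ≤ 2 ^ (k + 1) := by
        calc (j + 1) * 2 ^ (i' + 1) ≤ 2 ^ (k - i') * 2 ^ (i' + 1) :=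
          Nat.mul_le_mul_right _ (by omega)
        _ = 2 ^ (k + 1) := hpow
      have hb' : (j + 1) * 2 ^ i' ≤ 2 ^ k := by
        calc (j + 1) * 2 ^ i' ≤ 2 ^ (k - i') * 2 ^ i' := Nat.mul_le_mul_right _ (by omega)
        _ = 2 ^ k := hpow'
      rw [sum_filter_Ico (fun l => w (((dPerm hN ρ).trans σ) l)) _ _ hb]
      have hlo : j * 2 ^ (i' + 1) = 2 * (j * 2 ^ i') := by rw [pow_succ]; ring
      have hhi : (j + 1) * 2 ^ (i' + 1) = 2 * ((j + 1) * 2 ^ i') := by rw [pow_succ]; ring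
      rw [hlo, hhi, sum_Ico_double]
      have hstep : ∀ q ∈ Finset.Ico (j * 2 ^ i') ((j + 1) * 2 ^ i'),
          ((if h : 2 * q < 2 ^ (k + 1) then w (((dPerm hN ρ).trans σ) ⟨2 * q, h⟩) else 0)
            + (if h : 2 * q + 1 < 2 ^ (k + 1) then w (((dPerm hN ρ).trans σ) ⟨2 * q + 1, h⟩) else 0))
          = 2 * (if h : q < 2 ^ k then u (ρ ⟨q, h⟩) else 0) := by
        intro q hq
        rw [Finset.mem_Ico] at hq
        have hqk : q < 2 ^ k := lt_of_lt_of_le hq.2 hb'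
        have h0 : 2 * q < 2 ^ (k + 1) := by omega
        have h1 : 2 * q + 1 < 2 ^ (k + 1) := by omega
        rw [dif_pos h0, dif_pos h1, dif_pos hqk]
        have hd0 := dPerm_val0 hN ρ q hqk h0
        have hd1 := dPerm_val1 hN ρ q hqk h1
        rw [Equiv.trans_apply, Equiv.trans_apply, hd0, hd1]
        have hρlt := (ρ ⟨q, hqk⟩).isLt
        have e0 : w (σ ⟨2 * (ρ ⟨q, hqk⟩ : ℕ), by omega⟩) = W (2 * (ρ ⟨q, hqk⟩ : ℕ)) :=
          (hWval _ (by omega)).symm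
        have e1' : w (σ ⟨2 * (ρ ⟨q, hqk⟩ : ℕ) + 1, by omega⟩) = W (2 * (ρ ⟨q, hqk⟩ : ℕ) + 1) :=
          (hWval _ (by omega)).symm
        rw [e0, e1', ← h2u (ρ ⟨q, hqk⟩)]
      rw [Finset.sum_congr rfl hstep, ← Finset.mul_sum]
      have hIH := hρ i' hik j hj'
      rw [sum_filter_Ico (fun l => u (ρ l)) _ _ hb'] at hIH
      rw [pow_succ, mul_comm (2 ^ i') 2]
      exact mul_dvd_mul_left 2 hIH

/-- Every sequence of `2^n` non-negative integers with sum `2^n` can be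
reordered into a block-sequence: for every `i ≤ n` and `j < 2^{n-i}`, the sum
over the `j`-th consecutive block of size `2^i` is divisible by `2^i`. -/
theorem exists_block_sequence_reordering
    (n : ℕ) (v : Fin (2 ^ n) → ℕ) (hsum : ∑ l, v l = 2 ^ n) :
    ∃ π : Equiv.Perm (Fin (2 ^ n)),
      ∀ i ≤ n, ∀ j < 2 ^ (n - i),
        2 ^ i ∣ ∑ l ∈ Finset.univ.filter
          (fun l : Fin (2 ^ n) => j * 2 ^ i ≤ (l : ℕ) ∧ (l : ℕ) < (j + 1) * 2 ^ i),
          v (π l) := by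
  exact block_aux n v (by rw [hsum])
end

section
/- Let I : {0,1}^n → {0,1}^n be suffix-compatible and let B : {0,1}^n → {0,1}^n be computed by an in situ program b_1,...,b_n with signature 1,2,...,n. Then B∘I is computed by an in situ program p_1,...,p_n with signature 1,2,...,n, where, writing (y_1,...,y_n) = B(I(x_1,...,x_n)), the assignments satisfy p_i(y_1,...,y_{i-1},x_i,...,x_n) = y_i; in particular these defining formulas are consistent. -/
namespace SCCIAux

variable {n : ℕ}

/-- Elements of `(finRange n).drop k` have value `≥ k`. -/
lemma mem_drop_finRange {k : ℕ} {j : Fin n}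
    (h : j ∈ (List.finRange n).drop k) : k ≤ (j : ℕ) := by
  obtain ⟨i, hi, hij⟩ := List.getElem_of_mem h
  rw [List.getElem_drop] at hij
  subst hij
  simp [List.getElem_finRange]

/-- Folding updates at indices `≥ k` preserves components `< k`. -/
lemma foldl_preserve (f : Fin n → ((Fin n → Fin 2) → Fin 2))
    (k : ℕ) (l : List (Fin n)) (hl : ∀ j ∈ l, k ≤ (j : ℕ))
    (v : Fin n → Fin 2) (j : Fin n) (hj : (j : ℕ) < k) :
    l.foldl (fun v i => Function.update v i (f i v)) v j = v j := by
  induction l generalizing v with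
  | nil => rfl
  | cons a t ih =>
    simp only [List.foldl_cons]
    rw [ih (fun x hx => hl x (List.mem_cons_of_mem _ hx))]
    refine Function.update_of_ne ?_ _ _
    intro h
    have : k ≤ (j : ℕ) := h ▸ hl a List.mem_cons_self
    omega

/-- The state after the first `k` steps: components `≥ k` are unchanged. -/
lemma state_untouched (f : Fin n → ((Fin n → Fin 2) → Fin 2))
    (k : ℕ) (x : Fin n → Fin 2) (j : Fin n) (hj : k ≤ (j : ℕ)) :
    ((List.finRange n).take k).foldl
      (fun v i => Function.update v i (f i v)) x j = x j := by
  induction k with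
  | zero => rfl
  | succ k ih =>
    by_cases hk : k < n
    · rw [List.take_succ, List.foldl_append]
      have hget : (List.finRange n)[k]? = some ⟨k, hk⟩ := by
        rw [List.getElem?_eq_getElem (by simpa using hk)]
        simp [List.getElem_finRange]
      rw [hget]
      simp only [Option.toList_some, List.foldl_cons, List.foldl_nil]
      have hne : j ≠ ⟨k, hk⟩ := by
        intro h
        have : (j : ℕ) = k := by rw [h]
        omega
      rw [Function.update_of_ne hne _ _]
      exact ih (by omega)
    · rw [List.take_of_length_le (by simp; omega)]
      rw [List.take_of_length_le (by simp; omega)] at ih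
      exact ih (by omega)

/-- The state after the first `k` steps: components `< k` already have their
final value. -/
lemma state_done (f : Fin n → ((Fin n → Fin 2) → Fin 2))
    (k : ℕ) (x : Fin n → Fin 2) (j : Fin n) (hj : (j : ℕ) < k) :
    ((List.finRange n).take k).foldl
      (fun v i => Function.update v i (f i v)) x j =
    (List.finRange n).foldl (fun v i => Function.update v i (f i v)) x j := by
  conv_rhs => rw [← List.take_append_drop k (List.finRange n)]
  rw [List.foldl_append]
  exact (foldl_preserve f k _ (fun j hj => mem_drop_finRange hj) _ j hj).symm

/-- The state after the first `k` steps, explicitly. -/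
lemma state_mix (f : Fin n → ((Fin n → Fin 2) → Fin 2))
    (k : ℕ) (x : Fin n → Fin 2) :
    ((List.finRange n).take k).foldl
      (fun v i => Function.update v i (f i v)) x =
    fun j : Fin n => if (j : ℕ) < k then
      (List.finRange n).foldl (fun v i => Function.update v i (f i v)) x j
      else x j := by
  funext j
  by_cases hj : (j : ℕ) < k
  · rw [if_pos hj]; exact state_done f k x j hj
  · rw [if_neg hj]; exact state_untouched f k x j (by omega)

/-- The defining formula of an in situ program of signature `1,…,n`. -/
lemma formula (f : Fin n → ((Fin n → Fin 2) → Fin 2)) (i : Fin n)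
    (x : Fin n → Fin 2) :
    (List.finRange n).foldl (fun v i => Function.update v i (f i v)) x i =
    f i (fun j : Fin n => if (j : ℕ) < (i : ℕ) then
      (List.finRange n).foldl (fun v i => Function.update v i (f i v)) x j
      else x j) := by
  have h1 : ((List.finRange n).take ((i : ℕ) + 1)).foldl
      (fun v i => Function.update v i (f i v)) x i =
      (List.finRange n).foldl (fun v i => Function.update v i (f i v)) x i :=
    state_done f _ x i (by omega)
  rw [← h1, List.take_succ]
  have hget : (List.finRange n)[(i : ℕ)]? = some i := by
    rw [List.getElem?_eq_getElem (by simp)]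
    simp [List.getElem_finRange]
  rw [hget]
  simp only [Option.toList_some, List.foldl_append, List.foldl_cons,
    List.foldl_nil]
  rw [Function.update_self, state_mix]

end SCCIAux

/-- If `I` is suffix-compatible on `{0,1}^n` and `B` is computed by an in situ
program `b_1,…,b_n` of signature `1,…,n`, then `B ∘ I` is computed by an in
situ program `p_1,…,p_n` of signature `1,…,n` with
`p_i(y_1,…,y_{i-1},x_i,…,x_n) = y_i` where `y = B(I(x))`. -/
theorem suffix_compatible_compose_insitu
    (n : ℕ) (I B : (Fin n → Fin 2) → (Fin n → Fin 2))
    (hI : ∀ (k : ℕ) (x x' : Fin n → Fin 2),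
      (∀ j : Fin n, k ≤ (j : ℕ) → x j = x' j) →
      ∀ j : Fin n, k ≤ (j : ℕ) → I x j = I x' j)
    (b : Fin n → ((Fin n → Fin 2) → Fin 2))
    (hB : ∀ x, (List.finRange n).foldl
      (fun v i => Function.update v i (b i v)) x = B x) :
    ∃ p : Fin n → ((Fin n → Fin 2) → Fin 2),
      (∀ x, (List.finRange n).foldl
          (fun v i => Function.update v i (p i v)) x = B (I x)) ∧
      (∀ (i : Fin n) (x : Fin n → Fin 2),
        p i (fun j => if (j : ℕ) < (i : ℕ) then B (I x) j else x j)
          = B (I x) i) := by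
  classical
  -- the "mixed vector" of `x` at cutoff `k`
  have mixdef : ∀ (k : ℕ) (x : Fin n → Fin 2), ∃ m : Fin n → Fin 2,
      m = fun j : Fin n => if (j : ℕ) < k then B (I x) j else x j :=
    fun k x => ⟨_, rfl⟩
  let mix : ℕ → (Fin n → Fin 2) → (Fin n → Fin 2) :=
    fun k x => fun j : Fin n => if (j : ℕ) < k then B (I x) j else x j
  -- consistency: the mixed vector at cutoff `i` determines `B (I x) i`
  have hcons : ∀ (i : Fin n) (x x' : Fin n → Fin 2),
      mix i x = mix i x' → B (I x) i = B (I x') i := by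
    intro i x x' h
    have hx : ∀ j : Fin n, (i : ℕ) ≤ (j : ℕ) → x j = x' j := by
      intro j hj
      have := congrFun h j
      simpa [mix, if_neg (by omega : ¬ (j : ℕ) < (i : ℕ))] using this
    have hy : ∀ j : Fin n, (j : ℕ) < (i : ℕ) → B (I x) j = B (I x') j := by
      intro j hj
      have := congrFun h j
      simpa [mix, if_pos hj] using this
    have hIx : ∀ j : Fin n, (i : ℕ) ≤ (j : ℕ) → I x j = I x' j :=
      hI i x x' hx
    have f1 := SCCIAux.formula b i (I x)
    have f2 := SCCIAux.formula b i (I x')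
    rw [hB] at f1 f2
    rw [f1, f2]
    congr 1
    funext j
    by_cases hj : (j : ℕ) < (i : ℕ)
    · rw [if_pos hj, if_pos hj, hy j hj]
    · rw [if_neg hj, if_neg hj, hIx j (by omega)]
  -- define `p` via choice
  let p : Fin n → ((Fin n → Fin 2) → Fin 2) :=
    fun i v => if h : ∃ x, mix i x = v then B (I h.choose) i else v i
  have hkey : ∀ (i : Fin n) (x : Fin n → Fin 2),
      p i (mix i x) = B (I x) i := by
    intro i x
    have hex : ∃ x', mix (i : ℕ) x' = mix i x := ⟨x, rfl⟩
    show (if h : ∃ x', mix (i : ℕ) x' = mix i x then B (I h.choose) i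
      else mix i x i) = B (I x) i
    rw [dif_pos hex]
    exact hcons i hex.choose x hex.choose_spec
  refine ⟨p, ?_, ?_⟩
  · -- computation of `B ∘ I`
    intro x
    have hstate : ∀ k : ℕ, k ≤ n →
        ((List.finRange n).take k).foldl
          (fun v i => Function.update v i (p i v)) x = mix k x := by
      intro k hk
      induction k with
      | zero =>
        funext j
        simp [mix]
      | succ k ih =>
        have hkn : k < n := by omega
        rw [List.take_succ]
        have hget : (List.finRange n)[k]? = some ⟨k, hkn⟩ := by
          rw [List.getElem?_eq_getElem (by simpa using hkn)]
          simp [List.getElem_finRange]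
        rw [hget]
        simp only [Option.toList_some, List.foldl_append, List.foldl_cons,
          List.foldl_nil]
        rw [ih (by omega)]
        funext j
        by_cases hj : j = ⟨k, hkn⟩
        · subst hj
          rw [Function.update_self]
          have h1 := hkey ⟨k, hkn⟩ x
          have h2 : mix ((⟨k, hkn⟩ : Fin n) : ℕ) x = mix k x := rfl
          rw [h2] at h1
          rw [h1]
          simp [mix]
        · rw [Function.update_of_ne hj]
          have hjk : (j : ℕ) ≠ k := by
            intro h
            exact hj (Fin.ext h)
          show mix k x j = mix (k + 1) x j
          simp only [mix]
          by_cases h2 : (j : ℕ) < k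
          · rw [if_pos h2, if_pos (by omega)]
          · rw [if_neg h2, if_neg (by omega)]
    have hfin := hstate n le_rfl
    rw [List.take_of_length_le (by simp)] at hfin
    rw [hfin]
    funext j
    simp [mix, j.isLt]
  · -- the defining formulas
    intro i x
    exact hkey i x
end
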